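/- For the sign embedder y = x + sgn(ρ)√D·u with u ∈ {−1,+1}^n, the squared normalized correlation between u and y equals (|ρ| + √D)²/((|ρ| + √D)² + (α² − ρ²)), where α² = (1/n)Σx_i² and ρ = (1/n)Σx_iu_i. -/

import Mathlib

open Finset

/-!
Write `N` for the dimension and `c = sgn(ρ)√D`. Since `u i ^ 2 = 1`, we get `⟨u, y⟩ = N (ρ + c)`,
`‖u‖² = N` and `‖y‖² = N ((ρ + c)² + α² - ρ²)`, so the squared correlation is
`(ρ + c)² / ((ρ + c)² + α² - ρ²)` for any shift `c`. The sign choice makes `ρ + c = sgn(ρ) (|ρ| + √D)`,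
hence `(ρ + c)² = (|ρ| + √D)²`.
-/

theorem sum_sq_eq_card_of_sign {ι : Type*} [Fintype ι] {u : ι → ℝ}
    (hu : ∀ i, u i = 1 ∨ u i = -1) : ∑ i, u i ^ 2 = Fintype.card ι := by
  have hu2 (i : ι) : u i ^ 2 = 1 := by rcases hu i with h | h <;> simp [h]
  simp [hu2]

section Shift

variable {ι : Type*} [Fintype ι] {x u : ι → ℝ} {α2 ρ : ℝ} (c : ℝ)

theorem sum_mul_shift_of_sign (hu : ∀ i, u i = 1 ∨ u i = -1)
    (hρ : ρ = (1 / (Fintype.card ι : ℝ)) * ∑ i, x i * u i) (hN : (Fintype.card ι : ℝ) ≠ 0) :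
    ∑ i, u i * (x i + c * u i) = Fintype.card ι * (ρ + c) := by
  have hxu : ∑ i, x i * u i = Fintype.card ι * ρ := by rw [hρ]; field_simp
  calc ∑ i, u i * (x i + c * u i) = ∑ i, x i * u i + c * ∑ i, u i ^ 2 := by
        rw [mul_sum, ← sum_add_distrib]; exact sum_congr rfl fun i _ => by ring
    _ = Fintype.card ι * (ρ + c) := by rw [hxu, sum_sq_eq_card_of_sign hu]; ring

theorem sum_sq_shift_of_sign (hu : ∀ i, u i = 1 ∨ u i = -1)
    (hα2 : α2 = (1 / (Fintype.card ι : ℝ)) * ∑ i, x i ^ 2)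
    (hρ : ρ = (1 / (Fintype.card ι : ℝ)) * ∑ i, x i * u i) (hN : (Fintype.card ι : ℝ) ≠ 0) :
    ∑ i, (x i + c * u i) ^ 2 = Fintype.card ι * ((ρ + c) ^ 2 + (α2 - ρ ^ 2)) := by
  have hxu : ∑ i, x i * u i = Fintype.card ι * ρ := by rw [hρ]; field_simp
  have hx2 : ∑ i, x i ^ 2 = Fintype.card ι * α2 := by rw [hα2]; field_simp
  calc ∑ i, (x i + c * u i) ^ 2
        = ∑ i, x i ^ 2 + 2 * c * ∑ i, x i * u i + c ^ 2 * ∑ i, u i ^ 2 := by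
        simp only [mul_sum, ← sum_add_distrib]; exact sum_congr rfl fun i _ => by ring
    _ = Fintype.card ι * ((ρ + c) ^ 2 + (α2 - ρ ^ 2)) := by
        rw [hx2, hxu, sum_sq_eq_card_of_sign hu]; ring

theorem sq_normalized_corr_shift_of_sign (hu : ∀ i, u i = 1 ∨ u i = -1)
    (hα2 : α2 = (1 / (Fintype.card ι : ℝ)) * ∑ i, x i ^ 2)
    (hρ : ρ = (1 / (Fintype.card ι : ℝ)) * ∑ i, x i * u i) (hN : (Fintype.card ι : ℝ) ≠ 0) :
    ((∑ i, u i * (x i + c * u i)) /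
        (Real.sqrt (∑ i, u i ^ 2) * Real.sqrt (∑ i, (x i + c * u i) ^ 2))) ^ 2
      = (ρ + c) ^ 2 / ((ρ + c) ^ 2 + (α2 - ρ ^ 2)) := by
  have hy2 : 0 ≤ ∑ i, (x i + c * u i) ^ 2 := sum_nonneg fun i _ => sq_nonneg _
  rw [div_pow, mul_pow, Real.sq_sqrt (sum_nonneg fun i _ => sq_nonneg _), Real.sq_sqrt hy2,
    sum_mul_shift_of_sign c hu hρ hN, sum_sq_shift_of_sign c hu hα2 hρ hN,
    sum_sq_eq_card_of_sign hu, mul_pow, ← mul_assoc, ← sq,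
    mul_div_mul_left _ _ (pow_ne_zero 2 hN)]

end Shift

theorem add_sign_mul_sq (ρ t : ℝ) : (ρ + (if 0 ≤ ρ then 1 else -1) * t) ^ 2 = (|ρ| + t) ^ 2 := by
  split_ifs with h
  · rw [abs_of_nonneg h, one_mul]
  · rw [abs_of_neg (not_le.mp h)]; ring

theorem stmt_9_general (n : ℕ) (hn : 1 ≤ n) (x u : Fin n → ℝ) (D : ℝ)
    (hu : ∀ i, u i = 1 ∨ u i = -1)
    (α2 ρ : ℝ)
    (hα2 : α2 = (1/(n:ℝ)) * ∑ i, (x i)^2)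
    (hρ : ρ = (1/(n:ℝ)) * ∑ i, x i * u i)
    (y : Fin n → ℝ)
    (hy : y = fun i => x i + (if 0 ≤ ρ then (1:ℝ) else -1) * Real.sqrt D * u i) :
    ((∑ i, u i * y i) / (Real.sqrt (∑ i, (u i)^2) * Real.sqrt (∑ i, (y i)^2)))^2
      = (|ρ| + Real.sqrt D)^2 / ((|ρ| + Real.sqrt D)^2 + (α2 - ρ^2)) := by
  have hN : (n : ℝ) ≠ 0 := Nat.cast_ne_zero.mpr (by omega)
  rw [hy, ← add_sign_mul_sq]
  exact sq_normalized_corr_shift_of_sign _ hu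
    (by rwa [Fintype.card_fin]) (by rwa [Fintype.card_fin]) (by rwa [Fintype.card_fin])

/-- for the sign embedder y = x + sgn(ρ)√D·u, the squared
normalized correlation between u and y equals
(|ρ| + √D)²/((|ρ| + √D)² + (α² − ρ²)). -/
theorem stmt_9 (n : ℕ) (hn : 1 ≤ n) (x u : Fin n → ℝ) (D : ℝ) (hD : 0 < D)
    (hu : ∀ i, u i = 1 ∨ u i = -1)
    (α2 ρ : ℝ)
    (hα2 : α2 = (1/(n:ℝ)) * ∑ i, (x i)^2)
    (hρ : ρ = (1/(n:ℝ)) * ∑ i, x i * u i)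
    (y : Fin n → ℝ)
    (hy : y = fun i => x i + (if 0 ≤ ρ then (1:ℝ) else -1) * Real.sqrt D * u i)
    (hy0 : ∑ i, (y i)^2 ≠ 0) :
    ((∑ i, u i * y i) / (Real.sqrt (∑ i, (u i)^2) * Real.sqrt (∑ i, (y i)^2)))^2
      = (|ρ| + Real.sqrt D)^2 / ((|ρ| + Real.sqrt D)^2 + (α2 - ρ^2)) :=
  stmt_9_general n hn x u D hu α2 ρ hα2 hρ y hy
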